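/- Fix real parameters α, β ≥ 0 and a > 0. Let l, u, π : ℝ × ℝ → ℝ be smooth with l_x > 0 everywhere, satisfying the Clebsch system: (i) αu − β u_xx = −π l_x + (a/2) ∂_x(l_xx/l_x); (ii) l_t + u l_x = 0; (iii) π_t + ∂_x(π u − (a/2) u_xx/l_x) = 0. Define z : ℝ × ℝ → ℝ⁷ by z = (l, u, π, l_x, u_x, l_xx, u_xx). Then z satisfies the multisymplectic Hamiltonian system M z_t + K(z) z_x = ∇H(z), where, writing z = (l,u,π,Δ,Θ,Ξ,Π): M is the antisymmetric 7×7 matrix with M₁₃ = 1, M₃₁ = −1 and all other entries zero; K(z) is the antisymmetric 7×7 matrix with upper-triangular nonzero entries K₁₂ = π, K₁₃ = u, K₁₄ = (a/2)Π/Δ², K₁₇ = −a/(2Δ), K₂₄ = −(a/2)Ξ/Δ², K₂₅ = β, K₂₆ = a/(2Δ), K₄₅ = a/(2Δ) (and K_{ji} = −K_{ij}, all other entries zero); and H(z) = (α/2)u² − (β/2)Θ² − (a/2)ΘΞ/Δ + (a/2)Π. -/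

import Mathlib

/-- Partial derivative in the first (spatial) variable. -/
noncomputable def px (f : ℝ → ℝ → ℝ) : ℝ → ℝ → ℝ := fun x t => deriv (fun y => f y t) x

/-- Partial derivative in the second (time) variable. -/
noncomputable def pt (f : ℝ → ℝ → ℝ) : ℝ → ℝ → ℝ := fun x t => deriv (fun s => f x s) t

/-- The Euclidean gradient of `H : ℝⁿ → ℝ` (vector of partial derivatives). -/
noncomputable def gradH {n : ℕ} (H : (Fin n → ℝ) → ℝ) (w : Fin n → ℝ) : Fin n → ℝ :=
  fun i => deriv (fun s => H (Function.update w i s)) (w i)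

/-- The constant antisymmetric matrix `M` with `M₁₃ = 1`, `M₃₁ = −1`. -/
def Mmat7 : Matrix (Fin 7) (Fin 7) ℝ :=
  !![0, 0, 1, 0, 0, 0, 0;
     0, 0, 0, 0, 0, 0, 0;
     -1, 0, 0, 0, 0, 0, 0;
     0, 0, 0, 0, 0, 0, 0;
     0, 0, 0, 0, 0, 0, 0;
     0, 0, 0, 0, 0, 0, 0;
     0, 0, 0, 0, 0, 0, 0]

/-- The antisymmetric matrix `K(z)` of the multisymplectic formulation, with
`z = (l, u, π, Δ, Θ, Ξ, Π)` given as `w 0, …, w 6`. -/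
noncomputable def Kmat7 (a β : ℝ) (w : Fin 7 → ℝ) : Matrix (Fin 7) (Fin 7) ℝ :=
  !![0, w 2, w 1, a / 2 * w 6 / (w 3) ^ 2, 0, 0, -(a / (2 * w 3));
     -(w 2), 0, 0, -(a / 2 * w 5 / (w 3) ^ 2), β, a / (2 * w 3), 0;
     -(w 1), 0, 0, 0, 0, 0, 0;
     -(a / 2 * w 6 / (w 3) ^ 2), a / 2 * w 5 / (w 3) ^ 2, 0, 0, a / (2 * w 3), 0, 0;
     0, -β, 0, -(a / (2 * w 3)), 0, 0, 0;
     0, -(a / (2 * w 3)), 0, 0, 0, 0, 0;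
     a / (2 * w 3), 0, 0, 0, 0, 0, 0]

/-- The Hamiltonian `H(z) = (α/2)u² − (β/2)Θ² − (a/2)ΘΞ/Δ + (a/2)Π`. -/
noncomputable def Ham7 (α β a : ℝ) (w : Fin 7 → ℝ) : ℝ :=
  α / 2 * (w 1) ^ 2 - β / 2 * (w 4) ^ 2 - a / 2 * (w 4 * w 5 / w 3) + a / 2 * w 6

/-- The jet vector `z = (l, u, π, l_x, u_x, l_xx, u_xx)`. -/
noncomputable def zvec (l u pr : ℝ → ℝ → ℝ) (x t : ℝ) : Fin 7 → ℝ :=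
  ![l x t, u x t, pr x t, px l x t, px u x t, px (px l) x t, px (px u) x t]

/- ### Auxiliary lemmas -/

theorem slice_smooth' {f : ℝ → ℝ → ℝ} (hf : ContDiff ℝ (⊤ : ℕ∞) (fun p : ℝ × ℝ => f p.1 p.2)) (t : ℝ) :
    ContDiff ℝ (⊤ : ℕ∞) (fun y => f y t) :=
  hf.comp (contDiff_id.prodMk contDiff_const)

theorem px_eq_fderiv' {f : ℝ → ℝ → ℝ} (hf : ContDiff ℝ (⊤ : ℕ∞) (fun p : ℝ × ℝ => f p.1 p.2))
    (x t : ℝ) : px f x t = fderiv ℝ (fun p : ℝ × ℝ => f p.1 p.2) (x, t) (1, 0) := by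
  have h1 : HasFDerivAt (fun y : ℝ => (y, t)) (ContinuousLinearMap.inl ℝ ℝ ℝ) x :=
    hasFDerivAt_prodMk_left x t
  have h2 : HasFDerivAt (fun p : ℝ × ℝ => f p.1 p.2)
      (fderiv ℝ (fun p : ℝ × ℝ => f p.1 p.2) (x, t)) (x, t) :=
    (hf.differentiable (by simp) (x, t)).hasFDerivAt
  have h3 : HasDerivAt (fun y => f y t)
      (((fderiv ℝ (fun p : ℝ × ℝ => f p.1 p.2) (x, t)).comp
        (ContinuousLinearMap.inl ℝ ℝ ℝ)) 1) x := by have := (h2.comp x h1).hasDerivAt; exact this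
  have hpx : px f x t = deriv (fun y => f y t) x := rfl
  rw [hpx, h3.deriv]
  simp

theorem px_smooth' {f : ℝ → ℝ → ℝ} (hf : ContDiff ℝ (⊤ : ℕ∞) (fun p : ℝ × ℝ => f p.1 p.2)) :
    ContDiff ℝ (⊤ : ℕ∞) (fun p : ℝ × ℝ => px f p.1 p.2) := by
  have h : ContDiff ℝ (⊤ : ℕ∞) (fderiv ℝ (fun p : ℝ × ℝ => f p.1 p.2)) :=
    hf.fderiv_right (by simp)
  have h2 : ContDiff ℝ (⊤ : ℕ∞) (fun p : ℝ × ℝ => fderiv ℝ (fun p : ℝ × ℝ => f p.1 p.2) p (1, 0)) :=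
    h.clm_apply contDiff_const
  have he : (fun p : ℝ × ℝ => px f p.1 p.2)
      = fun p : ℝ × ℝ => fderiv ℝ (fun p : ℝ × ℝ => f p.1 p.2) p (1, 0) := by
    funext p
    exact px_eq_fderiv' hf p.1 p.2
  rw [he]; exact h2

theorem upd7 (w : Fin 7 → ℝ) (i j : Fin 7) (s : ℝ) (h : j ≠ i) :
    Function.update w i s j = w j :=
  Function.update_of_ne h s w

section grad
variable (α β a : ℝ) (w : Fin 7 → ℝ)

theorem gH0 : gradH (Ham7 α β a) w 0 = 0 := by
  have he : (fun s => Ham7 α β a (Function.update w 0 s)) = fun _ => Ham7 α β a w := by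
    funext s
    simp only [Ham7, upd7 w 0 1 s (by decide), upd7 w 0 3 s (by decide), upd7 w 0 4 s (by decide),
      upd7 w 0 5 s (by decide), upd7 w 0 6 s (by decide)]
  simp only [gradH, he, deriv_const]

theorem gH2 : gradH (Ham7 α β a) w 2 = 0 := by
  have he : (fun s => Ham7 α β a (Function.update w 2 s)) = fun _ => Ham7 α β a w := by
    funext s
    simp only [Ham7, upd7 w 2 1 s (by decide), upd7 w 2 3 s (by decide), upd7 w 2 4 s (by decide),
      upd7 w 2 5 s (by decide), upd7 w 2 6 s (by decide)]
  simp only [gradH, he, deriv_const]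

theorem gH1 : gradH (Ham7 α β a) w 1 = α * w 1 := by
  have he : (fun s => Ham7 α β a (Function.update w 1 s))
      = fun s => α / 2 * s ^ 2 - β / 2 * (w 4) ^ 2 - a / 2 * (w 4 * w 5 / w 3) + a / 2 * w 6 := by
    funext s
    simp only [Ham7, upd7 w 1 3 s (by decide), upd7 w 1 4 s (by decide),
      upd7 w 1 5 s (by decide), upd7 w 1 6 s (by decide), Function.update_self]
  have hd : HasDerivAt (fun s : ℝ => α / 2 * s ^ 2 - β / 2 * (w 4) ^ 2
      - a / 2 * (w 4 * w 5 / w 3) + a / 2 * w 6) (α * w 1) (w 1) := by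
    have h := ((((hasDerivAt_pow 2 (w 1)).const_mul (α / 2)).sub_const
      (β / 2 * (w 4) ^ 2)).sub_const (a / 2 * (w 4 * w 5 / w 3))).add_const (a / 2 * w 6)
    refine h.congr_deriv (Eq.symm ?_)
    norm_num; ring
  simp only [gradH, he, hd.deriv]

theorem gH3 (hw : w 3 ≠ 0) : gradH (Ham7 α β a) w 3 = a / 2 * (w 4 * w 5) / (w 3) ^ 2 := by
  have he : (fun s => Ham7 α β a (Function.update w 3 s))
      = fun s => α / 2 * (w 1) ^ 2 - β / 2 * (w 4) ^ 2 - a / 2 * (w 4 * w 5 / s)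
          + a / 2 * w 6 := by
    funext s
    simp only [Ham7, upd7 w 3 1 s (by decide), upd7 w 3 4 s (by decide),
      upd7 w 3 5 s (by decide), upd7 w 3 6 s (by decide), Function.update_self]
  have h1 : HasDerivAt (fun s : ℝ => w 4 * w 5 / s)
      (w 4 * w 5 * (-((w 3) ^ 2)⁻¹)) (w 3) := by
    simpa [div_eq_mul_inv] using (hasDerivAt_inv hw).const_mul (w 4 * w 5)
  have hd : HasDerivAt (fun s : ℝ => α / 2 * (w 1) ^ 2 - β / 2 * (w 4) ^ 2
      - a / 2 * (w 4 * w 5 / s) + a / 2 * w 6)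
      (a / 2 * (w 4 * w 5) / (w 3) ^ 2) (w 3) := by
    have h := ((h1.const_mul (a / 2)).const_sub
      (α / 2 * (w 1) ^ 2 - β / 2 * (w 4) ^ 2)).add_const (a / 2 * w 6)
    refine h.congr_deriv (Eq.symm ?_)
    field_simp
  simp only [gradH, he, hd.deriv]

theorem gH4 : gradH (Ham7 α β a) w 4 = -(β * w 4) - a / 2 * w 5 / w 3 := by
  have he : (fun s => Ham7 α β a (Function.update w 4 s))
      = fun s => α / 2 * (w 1) ^ 2 - β / 2 * s ^ 2 - a / 2 * (s * w 5 / w 3)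
          + a / 2 * w 6 := by
    funext s
    simp only [Ham7, upd7 w 4 1 s (by decide), upd7 w 4 3 s (by decide),
      upd7 w 4 5 s (by decide), upd7 w 4 6 s (by decide), Function.update_self]
  have h2 : HasDerivAt (fun s : ℝ => α / 2 * (w 1) ^ 2 - β / 2 * s ^ 2)
      (-(β / 2 * (↑2 * w 4 ^ (2 - 1)))) (w 4) :=
    ((hasDerivAt_pow 2 (w 4)).const_mul (β / 2)).const_sub (α / 2 * (w 1) ^ 2)
  have h3 : HasDerivAt (fun s : ℝ => a / 2 * (s * w 5 / w 3))
      (a / 2 * (1 * w 5 / w 3)) (w 4) :=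
    (((hasDerivAt_id' (x := w 4))).mul_const (w 5)).div_const (w 3) |>.const_mul (a / 2)
  have hd : HasDerivAt (fun s : ℝ => α / 2 * (w 1) ^ 2 - β / 2 * s ^ 2 - a / 2 * (s * w 5 / w 3)
      + a / 2 * w 6) (-(β * w 4) - a / 2 * w 5 / w 3) (w 4) := by
    have h := (h2.sub h3).add_const (a / 2 * w 6)
    refine h.congr_deriv (Eq.symm ?_)
    norm_num; ring
  simp only [gradH, he, hd.deriv]

theorem gH5 : gradH (Ham7 α β a) w 5 = -(a / 2 * w 4 / w 3) := by
  have he : (fun s => Ham7 α β a (Function.update w 5 s))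
      = fun s => α / 2 * (w 1) ^ 2 - β / 2 * (w 4) ^ 2 - a / 2 * (w 4 * s / w 3)
          + a / 2 * w 6 := by
    funext s
    simp only [Ham7, upd7 w 5 1 s (by decide), upd7 w 5 3 s (by decide),
      upd7 w 5 4 s (by decide), upd7 w 5 6 s (by decide), Function.update_self]
  have h3 : HasDerivAt (fun s : ℝ => a / 2 * (w 4 * s / w 3))
      (a / 2 * (w 4 * 1 / w 3)) (w 5) :=
    ((hasDerivAt_id' (x := w 5)).const_mul (w 4)).div_const (w 3) |>.const_mul (a / 2)
  have hd : HasDerivAt (fun s : ℝ => α / 2 * (w 1) ^ 2 - β / 2 * (w 4) ^ 2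
      - a / 2 * (w 4 * s / w 3) + a / 2 * w 6) (-(a / 2 * w 4 / w 3)) (w 5) := by
    have h := (h3.const_sub (α / 2 * (w 1) ^ 2 - β / 2 * (w 4) ^ 2)).add_const (a / 2 * w 6)
    refine h.congr_deriv (Eq.symm ?_)
    ring
  simp only [gradH, he, hd.deriv]

theorem gH6 : gradH (Ham7 α β a) w 6 = a / 2 := by
  have he : (fun s => Ham7 α β a (Function.update w 6 s))
      = fun s => α / 2 * (w 1) ^ 2 - β / 2 * (w 4) ^ 2 - a / 2 * (w 4 * w 5 / w 3)
          + a / 2 * s := by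
    funext s
    simp only [Ham7, upd7 w 6 1 s (by decide), upd7 w 6 3 s (by decide),
      upd7 w 6 4 s (by decide), upd7 w 6 5 s (by decide), Function.update_self]
  have hd : HasDerivAt (fun s : ℝ => α / 2 * (w 1) ^ 2 - β / 2 * (w 4) ^ 2
      - a / 2 * (w 4 * w 5 / w 3) + a / 2 * s) (a / 2) (w 6) := by
    have h := ((hasDerivAt_id' (x := w 6)).const_mul (a / 2)).const_add
      (α / 2 * (w 1) ^ 2 - β / 2 * (w 4) ^ 2 - a / 2 * (w 4 * w 5 / w 3))
    refine h.congr_deriv (Eq.symm ?_)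
    ring
  simp only [gradH, he, hd.deriv]

end grad

theorem vec7_five {γ : Type*} (a0 a1 a2 a3 a4 a5 a6 : γ) :
    (![a0, a1, a2, a3, a4, a5, a6] : Fin 7 → γ) 5 = a5 := by
  rw [show (5 : Fin 7) = Fin.succ 4 by rfl, Matrix.cons_val_succ]
  simp

theorem vec7_six {γ : Type*} (a0 a1 a2 a3 a4 a5 a6 : γ) :
    (![a0, a1, a2, a3, a4, a5, a6] : Fin 7 → γ) 6 = a6 := by
  rw [show (6 : Fin 7) = Fin.succ 5 by rfl, Matrix.cons_val_succ,
    show (5 : Fin 6) = Fin.succ 4 by rfl, Matrix.cons_val_succ]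
  simp

/-- Forward direction of Theorem 3.1: a solution of the Clebsch system (i)–(iii) yields a
solution `z = (l, u, π, l_x, u_x, l_xx, u_xx)` of the multisymplectic Hamiltonian system
`M z_t + K(z) z_x = ∇H(z)`. -/
theorem stmt8 (α β a : ℝ) (hα : 0 ≤ α) (hβ : 0 ≤ β) (ha : 0 < a)
    (l u pr : ℝ → ℝ → ℝ)
    (hl : ContDiff ℝ (⊤ : ℕ∞) (fun p : ℝ × ℝ => l p.1 p.2))
    (hu : ContDiff ℝ (⊤ : ℕ∞) (fun p : ℝ × ℝ => u p.1 p.2))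
    (hpr : ContDiff ℝ (⊤ : ℕ∞) (fun p : ℝ × ℝ => pr p.1 p.2))
    (hlx : ∀ x t : ℝ, 0 < px l x t)
    (h1 : ∀ x t : ℝ, α * u x t - β * px (px u) x t
        = -(pr x t) * px l x t + (a / 2) * px (fun x t => px (px l) x t / px l x t) x t)
    (h2 : ∀ x t : ℝ, pt l x t + u x t * px l x t = 0)
    (h3 : ∀ x t : ℝ, pt pr x t
        + px (fun x t => pr x t * u x t - (a / 2) * px (px u) x t / px l x t) x t = 0) :
    ∀ x t : ℝ,
      Mmat7.mulVec (fun i => pt (fun x t => zvec l u pr x t i) x t)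
        + (Kmat7 a β (zvec l u pr x t)).mulVec (fun i => px (fun x t => zvec l u pr x t i) x t)
      = gradH (Ham7 α β a) (zvec l u pr x t) := by
  intro x t
  have hne : px l x t ≠ 0 := ne_of_gt (hlx x t)
  -- joint smoothness of the derivatives
  have hpl2 := px_smooth' hl
  have hppl2 := px_smooth' hpl2
  have hpu2 := px_smooth' hu
  have hppu2 := px_smooth' hpu2
  -- differentiability of the spatial slices at x
  have du : DifferentiableAt ℝ (fun y => u y t) x :=
    ((slice_smooth' hu t).differentiable (by simp)) x
  have dpr : DifferentiableAt ℝ (fun y => pr y t) x :=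
    ((slice_smooth' hpr t).differentiable (by simp)) x
  have dpl : DifferentiableAt ℝ (fun y => px l y t) x :=
    ((slice_smooth' hpl2 t).differentiable (by simp)) x
  have dppl : DifferentiableAt ℝ (fun y => px (px l) y t) x :=
    ((slice_smooth' hppl2 t).differentiable (by simp)) x
  have dppu : DifferentiableAt ℝ (fun y => px (px u) y t) x :=
    ((slice_smooth' hppu2 t).differentiable (by simp)) x
  -- expansion of the quotient in equation (i)
  have E1 : px (fun x t => px (px l) x t / px l x t) x t
      = (px (px (px l)) x t * px l x t - px (px l) x t * px (px l) x t) / (px l x t) ^ 2 :=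
    deriv_div dppl dpl hne
  -- expansion of the flux in equation (iii)
  have d2 : DifferentiableAt ℝ (fun y => a / 2 * px (px u) y t / px l y t) x :=
    (dppu.const_mul (a / 2)).div dpl hne
  have E3 : px (fun x t => pr x t * u x t - (a / 2) * px (px u) x t / px l x t) x t
      = (px pr x t * u x t + pr x t * px u x t)
        - (a / 2 * px (px (px u)) x t * px l x t
            - a / 2 * px (px u) x t * px (px l) x t) / (px l x t) ^ 2 := by
    show deriv (fun y => pr y t * u y t - a / 2 * px (px u) y t / px l y t) x = _
    rw [deriv_fun_sub (f := fun y => pr y t * u y t) (dpr.mul du) d2, deriv_fun_mul dpr du,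
      deriv_fun_div (dppu.const_mul (a / 2)) dpl hne, deriv_const_mul _ dppu]
    rfl
  have key1 := h1 x t
  have key2 := h2 x t
  have key3 := h3 x t
  rw [E1] at key1
  rw [E3] at key3
  funext i
  fin_cases i
  · -- component 0
    simp [Mmat7, Kmat7, zvec, Matrix.mulVec, dotProduct, Fin.sum_univ_seven,
      vec7_five, vec7_six]
    simp only [show (fun x t => l x t) = l from rfl, show (fun x t => u x t) = u from rfl,
      show (fun x t => pr x t) = pr from rfl, show (fun x t => px l x t) = px l from rfl,
      show (fun x t => px u x t) = px u from rfl,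
      show (fun x t => px (px l) x t) = px (px l) from rfl,
      show (fun x t => px (px u) x t) = px (px u) from rfl]
    rw [gH0 α β a]
    field_simp
    field_simp at key3
    linear_combination key3
  · -- component 1
    simp [Mmat7, Kmat7, zvec, Matrix.mulVec, dotProduct, Fin.sum_univ_seven,
      vec7_five, vec7_six]
    simp only [show (fun x t => l x t) = l from rfl, show (fun x t => u x t) = u from rfl,
      show (fun x t => pr x t) = pr from rfl, show (fun x t => px l x t) = px l from rfl,
      show (fun x t => px u x t) = px u from rfl,
      show (fun x t => px (px l) x t) = px (px l) from rfl,
      show (fun x t => px (px u) x t) = px (px u) from rfl]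
    rw [gH1 α β a]
    simp [zvec, vec7_five, vec7_six]
    field_simp
    field_simp at key1
    linear_combination -key1
  · -- component 2
    simp [Mmat7, Kmat7, zvec, Matrix.mulVec, dotProduct, Fin.sum_univ_seven,
      vec7_five, vec7_six]
    simp only [show (fun x t => l x t) = l from rfl, show (fun x t => u x t) = u from rfl,
      show (fun x t => pr x t) = pr from rfl, show (fun x t => px l x t) = px l from rfl,
      show (fun x t => px u x t) = px u from rfl,
      show (fun x t => px (px l) x t) = px (px l) from rfl,
      show (fun x t => px (px u) x t) = px (px u) from rfl]
    rw [gH2 α β a]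
    linear_combination -key2
  · -- component 3
    simp [Mmat7, Kmat7, zvec, Matrix.mulVec, dotProduct, Fin.sum_univ_seven,
      vec7_five, vec7_six]
    simp only [show (fun x t => l x t) = l from rfl, show (fun x t => u x t) = u from rfl,
      show (fun x t => pr x t) = pr from rfl, show (fun x t => px l x t) = px l from rfl,
      show (fun x t => px u x t) = px u from rfl,
      show (fun x t => px (px l) x t) = px (px l) from rfl,
      show (fun x t => px (px u) x t) = px (px u) from rfl]
    rw [gH3 α β a _ (show (![l x t, u x t, pr x t, px l x t, px u x t, px (px l) x t,
      px (px u) x t] : Fin 7 → ℝ) 3 ≠ 0 by simpa using hne)]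
    simp [zvec, vec7_five, vec7_six]
    field_simp
    ring
  · -- component 4
    simp [Mmat7, Kmat7, zvec, Matrix.mulVec, dotProduct, Fin.sum_univ_seven,
      vec7_five, vec7_six]
    simp only [show (fun x t => l x t) = l from rfl, show (fun x t => u x t) = u from rfl,
      show (fun x t => pr x t) = pr from rfl, show (fun x t => px l x t) = px l from rfl,
      show (fun x t => px u x t) = px u from rfl,
      show (fun x t => px (px l) x t) = px (px l) from rfl,
      show (fun x t => px (px u) x t) = px (px u) from rfl]
    rw [gH4 α β a]
    simp [zvec, vec7_five, vec7_six]
    field_simp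
    ring
  · -- component 5
    simp [Mmat7, Kmat7, zvec, Matrix.mulVec, dotProduct, Fin.sum_univ_seven,
      vec7_five, vec7_six]
    simp only [show (fun x t => l x t) = l from rfl, show (fun x t => u x t) = u from rfl,
      show (fun x t => pr x t) = pr from rfl, show (fun x t => px l x t) = px l from rfl,
      show (fun x t => px u x t) = px u from rfl,
      show (fun x t => px (px l) x t) = px (px l) from rfl,
      show (fun x t => px (px u) x t) = px (px u) from rfl]
    rw [gH5 α β a]
    simp [zvec, vec7_five, vec7_six]
    field_simp
  · -- component 6
    simp [Mmat7, Kmat7, zvec, Matrix.mulVec, dotProduct, Fin.sum_univ_seven,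
      vec7_five, vec7_six]
    simp only [show (fun x t => l x t) = l from rfl, show (fun x t => u x t) = u from rfl,
      show (fun x t => pr x t) = pr from rfl, show (fun x t => px l x t) = px l from rfl,
      show (fun x t => px u x t) = px u from rfl,
      show (fun x t => px (px l) x t) = px (px l) from rfl,
      show (fun x t => px (px u) x t) = px (px u) from rfl]
    rw [gH6 α β a]
    rw [div_mul_eq_mul_div, div_eq_div_iff (mul_ne_zero two_ne_zero hne) two_ne_zero]
    ring
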